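/- (Trajectory correspondence) Let Σ be a BCN with matrix F ∈ L^{N×NM} and Σ_R its quotient as in the quotient construction (R induced by full row rank C ∈ L^{Ñ×N}, satisfying the invariance property, F̃_k = C⊙(F⋉δ_M^k)⊙C^T). For any input sequence u(0), u(1), … in Δ_M and any initial states with Cx(0) = x_R(0), the trajectories of Σ and Σ_R satisfy Cx(t) = x_R(t) for all t ≥ 0. -/
import Mathlib


open Matrix

noncomputable section
open scoped Classical

/-- The `i`-th canonical basis vector of length `N`. -/
def canon {N : ℕ} (i : Fin N) : Fin N → ℝ := Pi.single i 1

/-- `Delta N` is the set of canonical basis vectors of length `N`. -/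
def Delta (N : ℕ) : Set (Fin N → ℝ) := {v | ∃ i, v = canon i}

/-- A logical matrix: every column is a canonical basis vector. -/
def IsLogical {m : ℕ} {J : Type*} (A : Matrix (Fin m) J ℝ) : Prop :=
  ∀ j : J, ∃ i : Fin m, (fun r => A r j) = canon i

/-- Full row rank for a logical matrix: every canonical vector occurs among the columns. -/
def FullRowRank {m : ℕ} {J : Type*} (A : Matrix (Fin m) J ℝ) : Prop :=
  ∀ i : Fin m, ∃ j : J, (fun r => A r j) = canon i

/-- Semitensor product `F ⋉ u ⋉ x` for a BCN matrix `F ∈ L^{N×NM}`: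
`F` times the Kronecker product `u ⊗ x`. -/
def stp {N M : ℕ} (F : Matrix (Fin N) (Fin M × Fin N) ℝ)
    (u : Fin M → ℝ) (x : Fin N → ℝ) : Fin N → ℝ :=
  F.mulVec (fun p => u p.1 * x p.2)

/-- Boolean product of (0,1)-matrices: `(A ⊙ B) i k = ⋁ j, A i j ∧ B j k`. -/
def boolProd {I J K : Type*} (A : Matrix I J ℝ) (B : Matrix J K ℝ) : Matrix I K ℝ :=
  fun i k => if ∃ j, A i j = 1 ∧ B j k = 1 then 1 else 0

/-- The `N×N` block `F_k = F ⋉ δ_M^k` of `F`. -/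
def blockOf {N M : ℕ} (F : Matrix (Fin N) (Fin M × Fin N) ℝ) (k : Fin M) :
    Matrix (Fin N) (Fin N) ℝ :=
  fun r s => F r (k, s)

/-- The matrix `F̃ = [F̃_1 … F̃_M]` of the quotient system, `F̃_k = C ⊙ F_k ⊙ Cᵀ`. -/
def quotMat {N M Nt : ℕ} (F : Matrix (Fin N) (Fin M × Fin N) ℝ)
    (C : Matrix (Fin Nt) (Fin N) ℝ) : Matrix (Fin Nt) (Fin M × Fin Nt) ℝ :=
  fun i p => boolProd (boolProd C (blockOf F p.1)) Cᵀ i p.2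

lemma canon_apply {N : ℕ} (i a : Fin N) : canon i a = if a = i then 1 else 0 := by
  simp [canon, Pi.single_apply]

lemma stp_canon {N M : ℕ} (F : Matrix (Fin N) (Fin M × Fin N) ℝ) (k : Fin M) (j : Fin N) :
    stp F (canon k) (canon j) = fun r => F r (k, j) := by
  funext r
  unfold stp Matrix.mulVec dotProduct
  rw [Finset.sum_eq_single (k, j)]
  · simp [canon_apply]
  · intro p _ hp
    rcases p with ⟨a,b⟩
    simp only [canon_apply]
    by_cases h1 : a = k <;> by_cases h2 : b = j <;> simp_all
  · simp

lemma mulVec_canon {m n : ℕ} (C : Matrix (Fin m) (Fin n) ℝ) (j : Fin n) :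
    C.mulVec (canon j) = fun i => C i j := by
  funext i
  unfold Matrix.mulVec dotProduct
  rw [Finset.sum_eq_single j] <;> simp [canon_apply]
  intro b hb; simp [hb]

lemma step_lemma {N M Nt : ℕ} (F : Matrix (Fin N) (Fin M × Fin N) ℝ) (hF : IsLogical F)
    (C : Matrix (Fin Nt) (Fin N) ℝ) (hC : IsLogical C)
    (hinv : ∀ a ∈ Delta N, ∀ b ∈ Delta N, C.mulVec a = C.mulVec b →
      ∀ u ∈ Delta M, C.mulVec (stp F u a) = C.mulVec (stp F u b))
    (k : Fin M) (j : Fin N) :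
    C.mulVec (stp F (canon k) (canon j))
      = stp (quotMat F C) (canon k) (C.mulVec (canon j)) := by
  obtain ⟨r0, hr0⟩ := hF (k, j)
  obtain ⟨i0, hi0⟩ := hC j
  obtain ⟨i1, hi1⟩ := hC r0
  have hstp : stp F (canon k) (canon j) = canon r0 := by
    rw [stp_canon]; exact hr0
  -- LHS = canon i1
  have hL : C.mulVec (stp F (canon k) (canon j)) = canon i1 := by
    rw [hstp, mulVec_canon]; exact hi1
  -- RHS: C.mulVec (canon j) = canon i0
  have hCj : C.mulVec (canon j) = canon i0 := by rw [mulVec_canon]; exact hi0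
  rw [hL, hCj, stp_canon]
  funext i
  show canon i1 i = quotMat F C i (k, i0)
  unfold quotMat boolProd
  rw [canon_apply]
  by_cases hi : i = i1
  · subst hi
    rw [if_pos rfl, if_pos]
    refine ⟨j, ?_, ?_⟩
    · rw [if_pos]
      exact ⟨r0, by have := congrFun hi1 i; simpa [canon_apply] using this, by
        have := congrFun hr0 r0; simpa [canon_apply, blockOf] using this⟩
    · show C i0 j = 1
      have := congrFun hi0 i0; simpa [canon_apply] using this
  · rw [if_neg hi, eq_comm, if_neg]
    rintro ⟨s, hs1, hs2⟩
    -- hs2 : Cᵀ s i0 = 1, i.e. C i0 s = 1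
    obtain ⟨i2, hi2⟩ := hC s
    have hCi0s : C i0 s = 1 := hs2
    have hii : i2 = i0 := by
      have := congrFun hi2 i0
      rw [canon_apply] at this
      by_contra h
      rw [if_neg (by exact fun hh => h hh.symm)] at this
      rw [hCi0s] at this; norm_num at this
    -- so column s of C = canon i0 = column j of C
    have hsame : C.mulVec (canon s) = C.mulVec (canon j) := by
      rw [mulVec_canon, mulVec_canon, hi2, hi0, hii]
    have hinv' := hinv (canon s) ⟨s, rfl⟩ (canon j) ⟨j, rfl⟩ hsame (canon k) ⟨k, rfl⟩
    obtain ⟨r1, hr1⟩ := hF (k, s)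
    have hstps : stp F (canon k) (canon s) = canon r1 := by rw [stp_canon]; exact hr1
    have hCr1 : C.mulVec (canon r1) = canon i1 := by
      rw [← hstps, hinv', hstp, mulVec_canon]; exact hi1
    -- hs1 gives ∃ t, C i t = 1 ∧ F t (k,s) = 1
    have hs1' : ∃ t, C i t = 1 ∧ blockOf F k t s = 1 := by
      by_contra h; rw [if_neg h] at hs1; norm_num at hs1
    obtain ⟨t, ht1, ht2⟩ := hs1'
    have htr1 : t = r1 := by
      have := congrFun hr1 t
      rw [canon_apply] at this
      by_contra h
      rw [if_neg h] at this
      have : F t (k, s) = 0 := this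
      rw [blockOf] at ht2; rw [ht2] at this; norm_num at this
    have : C i r1 = canon i1 i := by
      have := congrFun hCr1 i
      rw [mulVec_canon] at this
      simpa using this
    rw [canon_apply, if_neg hi] at this
    rw [htr1, this] at ht1
    norm_num at ht1

/-- trajectory correspondence: if `Cx(0) = x_R(0)`, then for any input
sequence in `Δ_M` the trajectories of `Σ` and its quotient `Σ_R` satisfy
`Cx(t) = x_R(t)` for all `t`. -/
theorem stmt14 {N M Nt : ℕ} (F : Matrix (Fin N) (Fin M × Fin N) ℝ) (hF : IsLogical F)
    (C : Matrix (Fin Nt) (Fin N) ℝ) (hC : IsLogical C) (hfrr : FullRowRank C)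
    (hinv : ∀ a ∈ Delta N, ∀ b ∈ Delta N, C.mulVec a = C.mulVec b →
      ∀ u ∈ Delta M, C.mulVec (stp F u a) = C.mulVec (stp F u b))
    (u : ℕ → (Fin M → ℝ)) (hu : ∀ t, u t ∈ Delta M)
    (x : ℕ → (Fin N → ℝ)) (xR : ℕ → (Fin Nt → ℝ))
    (hx0 : x 0 ∈ Delta N)
    (hxdyn : ∀ t, x (t + 1) = stp F (u t) (x t))
    (hxRdyn : ∀ t, xR (t + 1) = stp (quotMat F C) (u t) (xR t))
    (h0 : C.mulVec (x 0) = xR 0) :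
    ∀ t, C.mulVec (x t) = xR t := by
  have key : ∀ t, x t ∈ Delta N ∧ C.mulVec (x t) = xR t := by
    intro t
    induction t with
    | zero => exact ⟨hx0, h0⟩
    | succ n ih =>
      obtain ⟨⟨j, hj⟩, hcx⟩ := ih
      obtain ⟨k, hk⟩ := hu n
      constructor
      · obtain ⟨r0, hr0⟩ := hF (k, j)
        refine ⟨r0, ?_⟩
        rw [hxdyn n, hj, hk, stp_canon]; exact hr0
      · rw [hxdyn n, hxRdyn n, ← hcx, hj, hk]
        exact step_lemma F hF C hC hinv k j
  exact fun t => (key t).2
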